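/- arXiv:1906.03917 — 2 statements merged into one kernel-verified Lean document; each statement's English description precedes it below -/
import Mathlib

section
/- Let R be a discrete valuation ring with fraction field K, and let A be a Noetherian commutative R-algebra such that A ⊗_R K is nonzero and reduced, and such that the nilradical of A is a prime ideal (i.e., Spec A is irreducible). Then A is flat as an R-module if and only if A is reduced. -/
/-!
If `A` is flat over `R`, then `A ↪ A ⊗_R K`, so `A` inherits reducedness from the generic fibre.
Conversely, a reduced ring whose nilradical is prime is a domain. Since `A ⊗_R K ≠ 0`, no nonzero
element of `R` dies in `A` (it would act both as `0` and as a unit on `A ⊗_R K`), so the domain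
`A` is torsion-free over `R`, and torsion-free modules over a PID are flat.
-/

open TensorProduct

theorem Algebra.TensorProduct.subsingleton_of_algebraMap_eq_zero_of_isUnit
    {R A S : Type*} [CommSemiring R] [CommSemiring A] [Algebra R A]
    [CommSemiring S] [Algebra R S] {r : R}
    (hA : algebraMap R A r = 0) (hS : IsUnit (algebraMap R S r)) :
    Subsingleton (A ⊗[R] S) := by
  have hunit := hS.map (Algebra.TensorProduct.includeRight : S →ₐ[R] A ⊗[R] S)
  rw [AlgHom.commutes, Algebra.TensorProduct.algebraMap_apply, hA, zero_tmul,
    isUnit_zero_iff] at hunit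
  exact subsingleton_of_zero_eq_one hunit

theorem injective_algebraMap_of_nontrivial_tensor_field
    {R A K : Type*} [CommRing R] [CommRing A] [Algebra R A] [Field K] [Algebra R K]
    (hK : Function.Injective (algebraMap R K)) [Nontrivial (A ⊗[R] K)] :
    Function.Injective (algebraMap R A) := by
  refine (injective_iff_map_eq_zero _).mpr fun r hr => ?_
  by_contra hr0
  have hunit : IsUnit (algebraMap R K r) :=
    isUnit_iff_ne_zero.mpr ((map_ne_zero_iff _ hK).mpr hr0)
  have := Algebra.TensorProduct.subsingleton_of_algebraMap_eq_zero_of_isUnit hr hunit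
  exact not_nontrivial (A ⊗[R] K) ‹_›

theorem isDomain_of_isReduced_of_nilradical_isPrime {A : Type*} [CommRing A] [IsReduced A]
    (h : (nilradical A).IsPrime) : IsDomain A := by
  rw [nilradical_eq_zero, Submodule.zero_eq_bot] at h
  exact IsDomain.of_bot_isPrime A

theorem flat_iff_reduced_over_dvr_general
    {R K A : Type} [CommRing R] [IsDomain R] [IsDiscreteValuationRing R]
    [Field K] [Algebra R K] [IsFractionRing R K]
    [CommRing A] [Algebra R A]
    (h_nontriv : Nontrivial (A ⊗[R] K))
    (h_red : IsReduced (A ⊗[R] K))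
    (h_irr : (nilradical A).IsPrime) :
    Module.Flat R A ↔ IsReduced A := by
  constructor
  · intro _
    exact isReduced_of_injective _
      (Algebra.TensorProduct.includeLeft_injective (S := R) (IsFractionRing.injective R K))
  · intro _
    have := isDomain_of_isReduced_of_nilradical_isPrime h_irr
    have : Module.IsTorsionFree R A := Module.isTorsionFree_iff_algebraMap_injective.mpr
      (injective_algebraMap_of_nontrivial_tensor_field (IsFractionRing.injective R K))
    infer_instance

/-- **Lemma 1.2 (algebraic local form).**
Let `R` be a DVR with fraction field `K` and `A` a Noetherian commutative
`R`-algebra such that `A ⊗_R K` is nonzero and reduced and the nilradical of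
`A` is prime (`Spec A` irreducible).  Then `A` is flat over `R` iff `A` is
reduced. -/
theorem flat_iff_reduced_over_dvr
    {R K A : Type} [CommRing R] [IsDomain R] [IsDiscreteValuationRing R]
    [Field K] [Algebra R K] [IsFractionRing R K]
    [CommRing A] [Algebra R A] [IsNoetherianRing A]
    (h_nontriv : Nontrivial (A ⊗[R] K))
    (h_red : IsReduced (A ⊗[R] K))
    (h_irr : (nilradical A).IsPrime) :
    Module.Flat R A ↔ IsReduced A :=
  flat_iff_reduced_over_dvr_general h_nontriv h_red h_irr
end

section
/- Let h = x_1^5 + x_2^5 + x_3^5 + x_4^5 + x_1 x_2 x_3 x_4 ∈ ℂ[x_1,x_2,x_3,x_4], and let R be the localization of ℂ[x_1,x_2,x_3,x_4] at the maximal ideal (x_1,x_2,x_3,x_4). Then the image of h² in R does not belong to the ideal of R generated by the images of the four partial derivatives ∂h/∂x_i for i = 1,…,4. -/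
open MvPolynomial
set_option maxHeartbeats 16000000
set_option maxRecDepth 100000



/-- The maximal ideal `(x₁, x₂, x₃, x₄)` of `ℂ[x₁, x₂, x₃, x₄]`
(variables indexed by `Fin 4`). -/
noncomputable def originIdeal4 : Ideal (MvPolynomial (Fin 4) ℂ) :=
  Ideal.span {X 0, X 1, X 2, X 3}

theorem originIdeal4_isPrime : originIdeal4.IsPrime := by
  have h : originIdeal4 = RingHom.ker (constantCoeff : MvPolynomial (Fin 4) ℂ →+* ℂ) := by
    ext p
    have hset : ({X 0, X 1, X 2, X 3} : Set (MvPolynomial (Fin 4) ℂ)) =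
        MvPolynomial.X '' (Set.univ : Set (Fin 4)) := by
      rw [Set.image_univ]
      ext q
      simp only [Set.mem_insert_iff, Set.mem_singleton_iff, Set.mem_range]
      constructor
      · rintro (rfl | rfl | rfl | rfl) <;> exact ⟨_, rfl⟩
      · rintro ⟨i, rfl⟩
        fin_cases i <;> simp
    rw [originIdeal4, hset, mem_ideal_span_X_image, RingHom.mem_ker]
    have hcc : constantCoeff p = coeff 0 p := rfl
    rw [hcc]
    constructor
    · intro hall
      by_contra hc
      obtain ⟨i, -, hi⟩ := hall 0 (mem_support_iff.mpr hc)
      exact hi rfl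
    · intro h0 m hm
      have hm0 : m ≠ 0 := by
        rintro rfl
        exact mem_support_iff.mp hm h0
      obtain ⟨i, hi⟩ := Finsupp.ne_iff.mp hm0
      exact ⟨i, Set.mem_univ i, hi⟩
  rw [h]
  exact RingHom.ker_isPrime _

noncomputable instance : originIdeal4.IsPrime := originIdeal4_isPrime

/-- The local ring of `ℂ[x₁,x₂,x₃,x₄]` at the maximal ideal `(x₁,x₂,x₃,x₄)`. -/
noncomputable abbrev LocalRingAtOrigin4 := Localization.AtPrime originIdeal4

/-- The polynomial `h = x₁⁵ + x₂⁵ + x₃⁵ + x₄⁵ + x₁x₂x₃x₄`. -/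
noncomputable def hN3 : MvPolynomial (Fin 4) ℂ :=
  X 0 ^ 5 + X 1 ^ 5 + X 2 ^ 5 + X 3 ^ 5 + X 0 * X 1 * X 2 * X 3



noncomputable def E4 : MvPolynomial (Fin 4) ℂ :=
  X 1 ^ 10 * X 2 ^ 10 * X 3 ^ 10 - 5 * X 0 ^ 4 * X 1 ^ 9 * X 2 ^ 9 * X 3 ^ 9 + X 0 ^ 5 * X 1 ^ 5 * X 2 ^ 10 * X 3 ^ 10 + X 0 ^ 5 * X 1 ^ 10 * X 2 ^ 5 * X 3 ^ 10 + X 0 ^ 5 * X 1 ^ 10 * X 2 ^ 10 * X 3 ^ 5 + 25 * X 0 ^ 8 * X 1 ^ 8 * X 2 ^ 8 * X 3 ^ 8 - 5 * X 0 ^ 9 * X 1 ^ 4 * X 2 ^ 9 * X 3 ^ 9 - 5 * X 0 ^ 9 * X 1 ^ 9 * X 2 ^ 4 * X 3 ^ 9 - 5 * X 0 ^ 9 * X 1 ^ 9 * X 2 ^ 9 * X 3 ^ 4 + X 0 ^ 10 * X 2 ^ 10 * X 3 ^ 10 + X 0 ^ 10 * X 1 ^ 5 * X 2 ^ 5 *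 X 3 ^ 10 + X 0 ^ 10 * X 1 ^ 5 * X 2 ^ 10 * X 3 ^ 5 + X 0 ^ 10 * X 1 ^ 10 * X 3 ^ 10 + X 0 ^ 10 * X 1 ^ 10 * X 2 ^ 5 * X 3 ^ 5 + X 0 ^ 10 * X 1 ^ 10 * X 2 ^ 10

noncomputable def mu4 : Fin 4 →₀ ℕ :=
  Finsupp.single 0 10 + Finsupp.single 1 10 + Finsupp.single 2 10 + Finsupp.single 3 10

lemma mu4_apply (j : Fin 4) : mu4 j = 10 := by
  fin_cases j <;> simp [mu4, Finsupp.single_apply]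

lemma coeff_mu4_mul_pow (q : MvPolynomial (Fin 4) ℂ) (j : Fin 4) :
    coeff mu4 (q * X j ^ 11) = 0 := by
  rw [X_pow_eq_monomial, coeff_mul_monomial', if_neg]
  rw [Finsupp.single_le_iff, mu4_apply]
  omega

lemma coeff_mu4_combo (B0 B1 B2 B3 : MvPolynomial (Fin 4) ℂ) :
    coeff mu4 (B0 * X 0 ^ 11 + B1 * X 1 ^ 11 + B2 * X 2 ^ 11 + B3 * X 3 ^ 11) = 0 := by
  simp [coeff_add, coeff_mu4_mul_pow]

lemma coeff_mu4_prod :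
    coeff mu4 (X 0 ^ 10 * X 1 ^ 10 * X 2 ^ 10 * X 3 ^ 10 : MvPolynomial (Fin 4) ℂ) = 1 := by
  simp only [X_pow_eq_monomial, monomial_mul, one_mul]
  rw [show mu4 = Finsupp.single 0 10 + Finsupp.single 1 10 + Finsupp.single 2 10 +
    Finsupp.single 3 10 from rfl, coeff_monomial, if_pos rfl]

abbrev Mon : Type := (ℕ × ℕ × ℕ × ℕ) × ℤ

noncomputable def monK (k : ℕ × ℕ × ℕ × ℕ) : MvPolynomial (Fin 4) ℂ :=
  X 0 ^ k.1 * X 1 ^ k.2.1 * X 2 ^ k.2.2.1 * X 3 ^ k.2.2.2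

noncomputable def interpM (t : Mon) : MvPolynomial (Fin 4) ℂ :=
  (t.2 : ℂ) • monK t.1

noncomputable def interp (l : List Mon) : MvPolynomial (Fin 4) ℂ :=
  (l.map interpM).sum

lemma interp_nil : interp [] = 0 := rfl

lemma interp_cons (t : Mon) (l : List Mon) :
    interp (t :: l) = interpM t + interp l := by
  simp [interp]

lemma interp_append (l1 l2 : List Mon) :
    interp (l1 ++ l2) = interp l1 + interp l2 := by
  induction l1 with
  | nil => simp [interp]
  | cons t l ih => simp only [List.cons_append, interp_cons, ih]; ring

lemma interpM_pair (k : ℕ × ℕ × ℕ × ℕ) (z : ℤ) :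
    interpM (k, z) = (z : ℂ) • monK k := rfl

lemma interpM_zero (k : ℕ × ℕ × ℕ × ℕ) : interpM (k, 0) = 0 := by
  simp [interpM]

lemma interpM_add (k : ℕ × ℕ × ℕ × ℕ) (z w : ℤ) :
    interpM (k, z + w) = interpM (k, z) + interpM (k, w) := by
  simp [interpM, add_smul]

def mulMon (m t : Mon) : Mon :=
  ((m.1.1 + t.1.1, m.1.2.1 + t.1.2.1, m.1.2.2.1 + t.1.2.2.1, m.1.2.2.2 + t.1.2.2.2),
    m.2 * t.2)

lemma interp_mulMon (m t : Mon) : interpM (mulMon m t) = interpM m * interpM t := by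
  simp only [interpM, mulMon, Int.cast_mul, monK, pow_add, smul_eq_C_mul, map_mul]
  ring

def mulList (m : Mon) (l : List Mon) : List Mon := l.map (mulMon m)

lemma interp_mulList (m : Mon) (l : List Mon) :
    interp (mulList m l) = interpM m * interp l := by
  induction l with
  | nil => simp [interp, mulList]
  | cons t l ih =>
      simp only [mulList, List.map_cons, interp_cons] at *
      rw [ih, interp_mulMon]
      ring

def pmul (l1 l2 : List Mon) : List Mon :=
  l1.foldr (fun m acc => mulList m l2 ++ acc) []

lemma interp_pmul (l1 l2 : List Mon) :
    interp (pmul l1 l2) = interp l1 * interp l2 := by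
  induction l1 with
  | nil => simp [pmul, interp]
  | cons t l ih =>
      simp only [pmul, List.foldr_cons, interp_append, interp_cons] at *
      rw [ih, interp_mulList]
      ring

def keyLt (a b : ℕ × ℕ × ℕ × ℕ) : Bool :=
  if a.1 ≠ b.1 then decide (a.1 < b.1)
  else if a.2.1 ≠ b.2.1 then decide (a.2.1 < b.2.1)
  else if a.2.2.1 ≠ b.2.2.1 then decide (a.2.2.1 < b.2.2.1)
  else decide (a.2.2.2 < b.2.2.2)

def insertMon (t : Mon) (l : List Mon) : List Mon :=
  match l with
  | [] => if t.2 = 0 then [] else [t]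
  | u :: rest =>
      if t.1 = u.1 then
        if t.2 + u.2 = 0 then rest else (t.1, t.2 + u.2) :: rest
      else if keyLt t.1 u.1 then
        if t.2 = 0 then u :: rest else t :: u :: rest
      else u :: insertMon t rest

lemma interp_insertMon (t : Mon) (l : List Mon) :
    interp (insertMon t l) = interpM t + interp l := by
  obtain ⟨k, z⟩ := t
  induction l with
  | nil =>
      by_cases h : z = 0
      · simp [insertMon, h, interp_nil, interpM_zero]
      · simp [insertMon, h, interp_cons, interp_nil]
  | cons u rest ih =>
      obtain ⟨ku, zu⟩ := u
      by_cases h1 : k = ku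
      · subst h1
        by_cases h2 : z + zu = 0
        · rw [show insertMon (k, z) ((k, zu) :: rest) = rest from by
            simp [insertMon, h2], interp_cons, ← add_assoc, ← interpM_add, h2,
            interpM_zero, zero_add]
        · rw [show insertMon (k, z) ((k, zu) :: rest) = (k, z + zu) :: rest from by
            simp [insertMon, h2], interp_cons, interp_cons, interpM_add]
          ring
      · by_cases h3 : keyLt k ku
        · by_cases h4 : z = 0
          · rw [show insertMon (k, z) ((ku, zu) :: rest) = (ku, zu) :: rest from by
              simp [insertMon, h1, h3, h4], h4, interpM_zero, zero_add]
          · rw [show insertMon (k, z) ((ku, zu) :: rest) = (k, z) :: (ku, zu) :: rest from by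
              simp [insertMon, h1, h3, h4], interp_cons]
        · rw [show insertMon (k, z) ((ku, zu) :: rest) = (ku, zu) :: insertMon (k, z) rest from by
            simp [insertMon, h1, h3], interp_cons, interp_cons, ih]
          ring

def pnorm (l : List Mon) : List Mon := l.foldr insertMon []

lemma interp_pnorm (l : List Mon) : interp (pnorm l) = interp l := by
  induction l with
  | nil => rfl
  | cons t l ih =>
      simp only [pnorm, List.foldr_cons, interp_insertMon, interp_cons] at *
      rw [ih]

theorem interp_eq_of_pnorm_eq {l1 l2 : List Mon} (h : pnorm l1 = pnorm l2) :
    interp l1 = interp l2 := by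
  rw [← interp_pnorm l1, ← interp_pnorm l2, h]

def l_E : List Mon := [((0,10,10,10),1), ((4,9,9,9),-5), ((5,5,10,10),1), ((5,10,5,10),1), ((5,10,10,5),1), ((8,8,8,8),25), ((9,4,9,9),-5), ((9,9,4,9),-5), ((9,9,9,4),-5), ((10,0,10,10),1), ((10,5,5,10),1), ((10,5,10,5),1), ((10,10,0,10),1), ((10,10,5,5),1), ((10,10,10,0),1)]

def l_h : List Mon := [((0,0,0,5),1), ((0,0,5,0),1), ((0,5,0,0),1), ((1,1,1,1),1), ((5,0,0,0),1)]

def l_f0 : List Mon := [((0,1,1,1),1), ((4,0,0,0),5)]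

def l_B00 : List Mon := [((1,8,8,8),125), ((2,4,9,9),-25), ((2,9,4,9),-25), ((2,9,9,4),-25), ((3,0,10,10),5), ((3,5,5,10),5), ((3,5,10,5),5), ((3,10,0,10),5), ((3,10,5,5),5), ((3,10,10,0),5)]

def l_B01 : List Mon := [((0,0,11,11),1), ((5,0,6,11),1), ((5,0,11,6),1), ((10,0,1,11),1), ((10,0,6,6),1), ((10,0,11,1),1)]

def l_B02 : List Mon := [((5,6,0,11),1), ((10,1,0,11),1), ((10,6,0,6),1)]

def l_B03 : List Mon := [((10,6,6,0),1)]

def l_f1 : List Mon := [((0,4,0,0),5), ((1,0,1,1),1)]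

def l_B10 : List Mon := [((0,0,11,11),1), ((0,5,6,11),1), ((0,5,11,6),1), ((0,10,1,11),1), ((0,10,6,6),1), ((0,10,11,1),1)]

def l_B11 : List Mon := [((0,3,10,10),5), ((4,2,9,9),-25), ((5,3,5,10),5), ((5,3,10,5),5), ((8,1,8,8),125), ((9,2,4,9),-25), ((9,2,9,4),-25), ((10,3,0,10),5), ((10,3,5,5),5), ((10,3,10,0),5)]

def l_B12 : List Mon := [((1,10,0,11),1), ((6,5,0,11),1), ((6,10,0,6),1)]

def l_B13 : List Mon := [((6,10,6,0),1)]

def l_f2 : List Mon := [((0,0,4,0),5), ((1,1,0,1),1)]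

def l_B20 : List Mon := [((0,1,10,11),1), ((0,6,5,11),1), ((0,6,10,6),1), ((0,11,0,11),1), ((0,11,5,6),1), ((0,11,10,1),1)]

def l_B21 : List Mon := [((1,0,10,11),1), ((6,0,5,11),1), ((6,0,10,6),1)]

def l_B22 : List Mon := [((0,10,3,10),5), ((4,9,2,9),-25), ((5,5,3,10),5), ((5,10,3,5),5), ((8,8,1,8),125), ((9,4,2,9),-25), ((9,9,2,4),-25), ((10,0,3,10),5), ((10,5,3,5),5), ((10,10,3,0),5)]

def l_B23 : List Mon := [((6,6,10,0),1)]

def l_f3 : List Mon := [((0,0,0,4),5), ((1,1,1,0),1)]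

def l_B30 : List Mon := [((0,1,11,10),1), ((0,6,6,10),1), ((0,6,11,5),1), ((0,11,1,10),1), ((0,11,6,5),1), ((0,11,11,0),1)]

def l_B31 : List Mon := [((1,0,11,10),1), ((6,0,6,10),1), ((6,0,11,5),1)]

def l_B32 : List Mon := [((6,6,0,10),1)]

def l_B33 : List Mon := [((0,10,10,3),5), ((4,9,9,2),-25), ((5,5,10,3),5), ((5,10,5,3),5), ((8,8,8,1),125), ((9,4,9,2),-25), ((9,9,4,2),-25), ((10,0,10,3),5), ((10,5,5,3),5), ((10,10,0,3),5)]

def l_D0 : List Mon := [((0,1,11,16),2), ((0,1,16,11),2), ((0,6,6,16),2), ((0,6,11,11),3), ((0,6,16,6),2), ((0,11,1,16),2), ((0,11,6,11),3), ((0,11,11,6),3), ((0,11,16,1),2), ((0,16,1,11),2), ((0,16,6,6),2), ((0,16,11,1),2), ((1,2,12,12),1), ((1,7,7,12),1), ((1,7,12,7),1), ((1,12,2,12),1), ((1,12,7,7),1), ((1,12,12,2),1), ((2,8,8,13),50), ((2,8,13,8),50), ((2,13,8,8),50), ((3,4,9,14),-10), ((3,4,14,9),-10), ((3,9,4,14),-10),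 ((3,9,9,9),15), ((3,9,14,4),-10), ((3,14,4,9),-10), ((3,14,9,4),-10), ((4,0,10,15),2), ((4,0,15,10),2), ((4,5,5,15),2), ((4,5,10,10),-3), ((4,5,15,5),2), ((4,10,0,15),2), ((4,10,5,10),-3), ((4,10,10,5),-3), ((4,10,15,0),2), ((4,15,0,10),2), ((4,15,5,5),2), ((4,15,10,0),2), ((5,1,11,11),2), ((5,6,6,11),2), ((5,6,11,6),2), ((5,11,1,11),2), ((5,11,6,6),2), ((5,11,11,1),2), ((7,8,8,8),25), ((8,4,9,9),-5), ((8,9,4,9),-5), ((8,9,9,4),-5), ((9,0,10,10),1), ((9,5,5,10),1), ((9,5,10,5),1), ((9,10,0,10),1), ((9,10,5,5),1), ((9,10,10,0),1)]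

def l_D1 : List Mon := [((0,4,10,15),2), ((0,4,15,10),2), ((0,9,10,10),1), ((1,0,11,16),2), ((1,0,16,11),2), ((1,5,11,11),2), ((2,1,12,12),1), ((4,3,9,14),-10), ((4,3,14,9),-10), ((4,8,9,9),-5), ((5,4,5,15),2), ((5,4,10,10),-3), ((5,4,15,5),2), ((5,9,5,10),1), ((5,9,10,5),1), ((6,0,6,16),2), ((6,0,11,11),3), ((6,0,16,6),2), ((6,5,6,11),2), ((6,5,11,6),2), ((7,1,7,12),1), ((7,1,12,7),1), ((8,2,8,13),50), ((8,2,13,8),50), ((8,7,8,8),25), ((9,3,4,14),-10), ((9,3,9,9),15), ((9,3,14,4),-10), ((9,8,4,9),-5), ((9,8,9,4),-5), ((10,4,0,15),2), ((10,4,5,10),-3), ((10,4,10,5),-3), ((10,4,15,0),2), ((10,9,0,10),1), ((10,9,5,5),1), ((10,9,10,0),1)]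

def l_D2 : List Mon := [((0,10,4,15),2), ((0,10,9,10),1), ((4,9,3,14),-10), ((4,9,8,9),-5), ((5,5,4,15),2), ((5,5,9,10),1), ((5,10,4,10),-3), ((5,10,9,5),1), ((6,6,0,16),2), ((6,6,5,11),2), ((7,7,1,12),1), ((8,8,2,13),50), ((8,8,7,8),25), ((9,4,3,14),-10), ((9,4,8,9),-5), ((9,9,3,9),15), ((9,9,8,4),-5), ((10,0,4,15),2), ((10,0,9,10),1), ((10,5,4,10),-3), ((10,5,9,5),1), ((10,10,4,5),-3), ((10,10,9,0),1)]

def l_D3 : List Mon := [((0,10,10,9),1), ((4,9,9,8),-5), ((5,5,10,9),1), ((5,10,5,9),1), ((5,10,10,4),-3), ((8,8,8,7),25), ((9,4,9,8),-5), ((9,9,4,8),-5), ((9,9,9,3),15), ((10,0,10,9),1), ((10,5,5,9),1), ((10,5,10,4),-3), ((10,10,0,9),1), ((10,10,5,4),-3)]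



lemma interp_single (k : ℕ × ℕ × ℕ × ℕ) (z : ℤ) :
    interp [(k, z)] = (z : ℂ) • monK k := by
  simp [interp, interpM]

lemma hE4 : E4 = interp l_E := by
  rw [E4]
  simp only [l_E, interp, List.map_cons, List.map_nil, List.sum_cons, List.sum_nil,
    interpM, monK, smul_eq_C_mul, map_ofNat, map_one, map_neg]
  push_cast
  simp only [map_ofNat, map_one, map_neg, map_zero]
  ring

lemma hhN3 : hN3 = interp l_h := by
  rw [hN3]
  simp only [l_h, interp, List.map_cons, List.map_nil, List.sum_cons, List.sum_nil,
    interpM, monK, smul_eq_C_mul, map_ofNat, map_one, map_neg]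
  push_cast
  simp only [map_ofNat, map_one, map_neg, map_zero]
  ring


lemma hX0 : (X 0 ^ 11 : MvPolynomial (Fin 4) ℂ) = interp [((11,0,0,0), 1)] := by
  rw [interp_single]
  simp [monK]


lemma hX1 : (X 1 ^ 11 : MvPolynomial (Fin 4) ℂ) = interp [((0,11,0,0), 1)] := by
  rw [interp_single]
  simp [monK]


lemma hX2 : (X 2 ^ 11 : MvPolynomial (Fin 4) ℂ) = interp [((0,0,11,0), 1)] := by
  rw [interp_single]
  simp [monK]


lemma hX3 : (X 3 ^ 11 : MvPolynomial (Fin 4) ℂ) = interp [((0,0,0,11), 1)] := by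
  rw [interp_single]
  simp [monK]


lemma hf0 : pderiv 0 hN3 = interp l_f0 := by
  rw [show (pderiv 0 hN3 : MvPolynomial (Fin 4) ℂ) = 5 * X 0 ^ 4 + X 1 * X 2 * X 3 from by
    simp [hN3, pderiv_mul, pderiv_pow, pderiv_X]
    try ring]
  simp only [l_f0, interp, List.map_cons, List.map_nil, List.sum_cons, List.sum_nil,
    interpM, monK, smul_eq_C_mul, map_ofNat, map_one, map_neg]
  push_cast
  simp only [map_ofNat, map_one, map_neg, map_zero]
  ring


lemma hf1 : pderiv 1 hN3 = interp l_f1 := by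
  rw [show (pderiv 1 hN3 : MvPolynomial (Fin 4) ℂ) = 5 * X 1 ^ 4 + X 0 * X 2 * X 3 from by
    simp [hN3, pderiv_mul, pderiv_pow, pderiv_X]
    try ring]
  simp only [l_f1, interp, List.map_cons, List.map_nil, List.sum_cons, List.sum_nil,
    interpM, monK, smul_eq_C_mul, map_ofNat, map_one, map_neg]
  push_cast
  simp only [map_ofNat, map_one, map_neg, map_zero]
  ring


lemma hf2 : pderiv 2 hN3 = interp l_f2 := by
  rw [show (pderiv 2 hN3 : MvPolynomial (Fin 4) ℂ) = 5 * X 2 ^ 4 + X 0 * X 1 * X 3 from by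
    simp [hN3, pderiv_mul, pderiv_pow, pderiv_X]
    try ring]
  simp only [l_f2, interp, List.map_cons, List.map_nil, List.sum_cons, List.sum_nil,
    interpM, monK, smul_eq_C_mul, map_ofNat, map_one, map_neg]
  push_cast
  simp only [map_ofNat, map_one, map_neg, map_zero]
  ring


lemma hf3 : pderiv 3 hN3 = interp l_f3 := by
  rw [show (pderiv 3 hN3 : MvPolynomial (Fin 4) ℂ) = 5 * X 3 ^ 4 + X 0 * X 1 * X 2 from by
    simp [hN3, pderiv_mul, pderiv_pow, pderiv_X]
    try ring]
  simp only [l_f3, interp, List.map_cons, List.map_nil, List.sum_cons, List.sum_nil,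
    interpM, monK, smul_eq_C_mul, map_ofNat, map_one, map_neg]
  push_cast
  simp only [map_ofNat, map_one, map_neg, map_zero]
  ring


lemma E_pd0_eq : E4 * pderiv 0 hN3 =
    interp l_B00 * X 0 ^ 11 + (interp l_B01 * X 1 ^ 11 +
    (interp l_B02 * X 2 ^ 11 + interp l_B03 * X 3 ^ 11)) := by
  rw [hE4, hf0, ← interp_pmul, hX0, hX1, hX2, hX3,
    ← interp_pmul, ← interp_pmul, ← interp_pmul, ← interp_pmul,
    ← interp_append, ← interp_append, ← interp_append]
  exact interp_eq_of_pnorm_eq (by decide)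


lemma E_pd1_eq : E4 * pderiv 1 hN3 =
    interp l_B10 * X 0 ^ 11 + (interp l_B11 * X 1 ^ 11 +
    (interp l_B12 * X 2 ^ 11 + interp l_B13 * X 3 ^ 11)) := by
  rw [hE4, hf1, ← interp_pmul, hX0, hX1, hX2, hX3,
    ← interp_pmul, ← interp_pmul, ← interp_pmul, ← interp_pmul,
    ← interp_append, ← interp_append, ← interp_append]
  exact interp_eq_of_pnorm_eq (by decide)


lemma E_pd2_eq : E4 * pderiv 2 hN3 =
    interp l_B20 * X 0 ^ 11 + (interp l_B21 * X 1 ^ 11 +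
    (interp l_B22 * X 2 ^ 11 + interp l_B23 * X 3 ^ 11)) := by
  rw [hE4, hf2, ← interp_pmul, hX0, hX1, hX2, hX3,
    ← interp_pmul, ← interp_pmul, ← interp_pmul, ← interp_pmul,
    ← interp_append, ← interp_append, ← interp_append]
  exact interp_eq_of_pnorm_eq (by decide)


lemma E_pd3_eq : E4 * pderiv 3 hN3 =
    interp l_B30 * X 0 ^ 11 + (interp l_B31 * X 1 ^ 11 +
    (interp l_B32 * X 2 ^ 11 + interp l_B33 * X 3 ^ 11)) := by
  rw [hE4, hf3, ← interp_pmul, hX0, hX1, hX2, hX3,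
    ← interp_pmul, ← interp_pmul, ← interp_pmul, ← interp_pmul,
    ← interp_append, ← interp_append, ← interp_append]
  exact interp_eq_of_pnorm_eq (by decide)


lemma hMu : (X 0 ^ 10 * X 1 ^ 10 * X 2 ^ 10 * X 3 ^ 10 : MvPolynomial (Fin 4) ℂ) =
    interp [((10,10,10,10), 1)] := by
  rw [interp_single]
  simp [monK]

lemma E_h2_eq : E4 * hN3 ^ 2 =
    X 0 ^ 10 * X 1 ^ 10 * X 2 ^ 10 * X 3 ^ 10 +
    (interp l_D0 * X 0 ^ 11 + (interp l_D1 * X 1 ^ 11 +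
    (interp l_D2 * X 2 ^ 11 + interp l_D3 * X 3 ^ 11))) := by
  rw [hE4, hhN3, pow_two, ← interp_pmul, ← interp_pmul, hMu, hX0, hX1, hX2, hX3,
    ← interp_pmul, ← interp_pmul, ← interp_pmul, ← interp_pmul,
    ← interp_append, ← interp_append, ← interp_append, ← interp_append]
  exact interp_eq_of_pnorm_eq (by decide)

lemma coeff_combo (A B C D q : MvPolynomial (Fin 4) ℂ) :
    coeff mu4 (q * (A * X 0 ^ 11 + (B * X 1 ^ 11 + (C * X 2 ^ 11 + D * X 3 ^ 11)))) = 0 := by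
  rw [show q * (A * X 0 ^ 11 + (B * X 1 ^ 11 + (C * X 2 ^ 11 + D * X 3 ^ 11))) =
      (q * A) * X 0 ^ 11 + ((q * B) * X 1 ^ 11 + ((q * C) * X 2 ^ 11 + (q * D) * X 3 ^ 11))
      from by ring, coeff_add, coeff_add, coeff_add, coeff_mu4_mul_pow, coeff_mu4_mul_pow,
    coeff_mu4_mul_pow, coeff_mu4_mul_pow]
  ring

lemma coeff_E_pd_0 (q : MvPolynomial (Fin 4) ℂ) :
    coeff mu4 (q * (E4 * pderiv 0 hN3)) = 0 := by
  rw [E_pd0_eq]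
  exact coeff_combo _ _ _ _ q

lemma coeff_E_pd_1 (q : MvPolynomial (Fin 4) ℂ) :
    coeff mu4 (q * (E4 * pderiv 1 hN3)) = 0 := by
  rw [E_pd1_eq]
  exact coeff_combo _ _ _ _ q

lemma coeff_E_pd_2 (q : MvPolynomial (Fin 4) ℂ) :
    coeff mu4 (q * (E4 * pderiv 2 hN3)) = 0 := by
  rw [E_pd2_eq]
  exact coeff_combo _ _ _ _ q

lemma coeff_E_pd_3 (q : MvPolynomial (Fin 4) ℂ) :
    coeff mu4 (q * (E4 * pderiv 3 hN3)) = 0 := by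
  rw [E_pd3_eq]
  exact coeff_combo _ _ _ _ q

lemma mem_originIdeal4_iff (p : MvPolynomial (Fin 4) ℂ) :
    p ∈ originIdeal4 ↔ constantCoeff p = 0 := by
  have hset : ({X 0, X 1, X 2, X 3} : Set (MvPolynomial (Fin 4) ℂ)) =
      MvPolynomial.X '' (Set.univ : Set (Fin 4)) := by
    rw [Set.image_univ]
    ext q
    simp only [Set.mem_insert_iff, Set.mem_singleton_iff, Set.mem_range]
    constructor
    · rintro (rfl | rfl | rfl | rfl) <;> exact ⟨_, rfl⟩
    · rintro ⟨i, rfl⟩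
      fin_cases i <;> simp
  rw [originIdeal4, hset, mem_ideal_span_X_image]
  have hcc : constantCoeff p = coeff 0 p := rfl
  rw [hcc]
  constructor
  · intro hall
    by_contra hc
    obtain ⟨i, -, hi⟩ := hall 0 (mem_support_iff.mpr hc)
    exact hi rfl
  · intro h0 m hm
    have hm0 : m ≠ 0 := by
      rintro rfl
      exact mem_support_iff.mp hm h0
    obtain ⟨i, hi⟩ := Finsupp.ne_iff.mp hm0
    exact ⟨i, Set.mem_univ i, hi⟩

lemma originIdeal4_eq_span_range :
    originIdeal4 = Ideal.span (Set.range (X : Fin 4 → MvPolynomial (Fin 4) ℂ)) := by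
  rw [originIdeal4]
  congr 1
  rw [← Set.image_univ]
  ext q
  simp only [Set.mem_insert_iff, Set.mem_singleton_iff, Set.mem_image, Set.mem_univ, true_and]
  constructor
  · rintro (rfl | rfl | rfl | rfl) <;> exact ⟨_, rfl⟩
  · rintro ⟨i, rfl⟩
    fin_cases i <;> simp

/-- **Claim (2.6.3) for `n = 3`.**  In the localization `R` of `ℂ[x₁,x₂,x₃,x₄]`
at the maximal ideal `(x₁,x₂,x₃,x₄)`, the image of `h²`, where
`h = x₁⁵ + x₂⁵ + x₃⁵ + x₄⁵ + x₁x₂x₃x₄`, does not lie in the ideal generated by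
the images of the four partial derivatives of `h`. -/
theorem h_sq_not_mem_jacobian_ideal :
    algebraMap (MvPolynomial (Fin 4) ℂ) LocalRingAtOrigin4 (hN3 ^ 2) ∉
      Ideal.span ((fun i => algebraMap (MvPolynomial (Fin 4) ℂ) LocalRingAtOrigin4
        (pderiv i hN3)) '' (Set.univ : Set (Fin 4))) := by
  intro hmem
  rw [Set.image_univ,
    show Set.range (fun i => algebraMap (MvPolynomial (Fin 4) ℂ) LocalRingAtOrigin4
        (pderiv i hN3)) = algebraMap (MvPolynomial (Fin 4) ℂ) LocalRingAtOrigin4 ''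
        Set.range (fun i => pderiv i hN3) from by rw [← Set.range_comp]; rfl,
    ← Ideal.map_span] at hmem
  obtain ⟨⟨⟨a, ha⟩, s⟩, hs⟩ :=
    (IsLocalization.mem_map_algebraMap_iff originIdeal4.primeCompl LocalRingAtOrigin4).mp hmem
  rw [← map_mul] at hs
  have hinj : Function.Injective
      (algebraMap (MvPolynomial (Fin 4) ℂ) LocalRingAtOrigin4) :=
    IsLocalization.injective _ originIdeal4.primeCompl_le_nonZeroDivisors
  have heq : hN3 ^ 2 * (s : MvPolynomial (Fin 4) ℂ) = a := hinj hs
  obtain ⟨c, hc⟩ := (Submodule.mem_span_range_iff_exists_fun _).mp ha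
  set c0 : ℂ := constantCoeff (s : MvPolynomial (Fin 4) ℂ) with hc0
  have hc0ne : c0 ≠ 0 := by
    intro h
    exact s.2 ((mem_originIdeal4_iff _).mpr h)
  have hs0 : (s : MvPolynomial (Fin 4) ℂ) - C c0 ∈ originIdeal4 := by
    rw [mem_originIdeal4_iff]
    simp [hc0]
  have hs0' : (s : MvPolynomial (Fin 4) ℂ) - C c0 ∈
      Ideal.span (Set.range (X : Fin 4 → MvPolynomial (Fin 4) ℂ)) := by
    rw [← originIdeal4_eq_span_range]
    exact hs0
  obtain ⟨q, hq⟩ := (Submodule.mem_span_range_iff_exists_fun _).mp hs0'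
  have hsdecomp : (s : MvPolynomial (Fin 4) ℂ) =
      C c0 + (q 0 * X 0 + q 1 * X 1 + q 2 * X 2 + q 3 * X 3) := by
    rw [Fin.sum_univ_four] at hq
    simp only [smul_eq_mul] at hq
    rw [hq]
    ring
  have hco := congrArg (fun p => coeff mu4 (E4 * p)) heq
  have hrhs : coeff mu4 (E4 * a) = 0 := by
    rw [← hc, Fin.sum_univ_four]
    simp only [smul_eq_mul]
    rw [show E4 * (c 0 * pderiv 0 hN3 + c 1 * pderiv 1 hN3 + c 2 * pderiv 2 hN3 +
        c 3 * pderiv 3 hN3) =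
        c 0 * (E4 * pderiv 0 hN3) + (c 1 * (E4 * pderiv 1 hN3) +
        (c 2 * (E4 * pderiv 2 hN3) + c 3 * (E4 * pderiv 3 hN3))) from by ring]
    rw [coeff_add, coeff_add, coeff_add, coeff_E_pd_0 (c 0), coeff_E_pd_1 (c 1),
      coeff_E_pd_2 (c 2), coeff_E_pd_3 (c 3)]
    ring
  have hlhs : coeff mu4 (E4 * (hN3 ^ 2 * (s : MvPolynomial (Fin 4) ℂ))) = c0 := by
    obtain ⟨B0, B1, B2, B3, hB⟩ :
        ∃ B0 B1 B2 B3 : MvPolynomial (Fin 4) ℂ, E4 * hN3 ^ 2 =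
          X 0 ^ 10 * X 1 ^ 10 * X 2 ^ 10 * X 3 ^ 10 +
          (B0 * X 0 ^ 11 + (B1 * X 1 ^ 11 + (B2 * X 2 ^ 11 + B3 * X 3 ^ 11))) :=
      ⟨_, _, _, _, E_h2_eq⟩
    rw [hsdecomp,
      show E4 * (hN3 ^ 2 * (C c0 + (q 0 * X 0 + q 1 * X 1 + q 2 * X 2 + q 3 * X 3))) =
        C c0 * (E4 * hN3 ^ 2) +
        (q 0 * X 0 + q 1 * X 1 + q 2 * X 2 + q 3 * X 3) * (E4 * hN3 ^ 2) from by ring,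
      hB,
      show C c0 * (X 0 ^ 10 * X 1 ^ 10 * X 2 ^ 10 * X 3 ^ 10 +
          (B0 * X 0 ^ 11 + (B1 * X 1 ^ 11 + (B2 * X 2 ^ 11 + B3 * X 3 ^ 11)))) +
        (q 0 * X 0 + q 1 * X 1 + q 2 * X 2 + q 3 * X 3) *
          (X 0 ^ 10 * X 1 ^ 10 * X 2 ^ 10 * X 3 ^ 10 +
          (B0 * X 0 ^ 11 + (B1 * X 1 ^ 11 + (B2 * X 2 ^ 11 + B3 * X 3 ^ 11)))) =
        C c0 * (X 0 ^ 10 * X 1 ^ 10 * X 2 ^ 10 * X 3 ^ 10) +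
        (1 : MvPolynomial (Fin 4) ℂ) *
          (((C c0 + q 0 * X 0 + q 1 * X 1 + q 2 * X 2 + q 3 * X 3) * B0 +
              q 0 * (X 1 ^ 10 * X 2 ^ 10 * X 3 ^ 10)) * X 0 ^ 11 +
           (((C c0 + q 0 * X 0 + q 1 * X 1 + q 2 * X 2 + q 3 * X 3) * B1 +
              q 1 * (X 0 ^ 10 * X 2 ^ 10 * X 3 ^ 10)) * X 1 ^ 11 +
            (((C c0 + q 0 * X 0 + q 1 * X 1 + q 2 * X 2 + q 3 * X 3) * B2 +
              q 2 * (X 0 ^ 10 * X 1 ^ 10 * X 3 ^ 10)) * X 2 ^ 11 +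
             ((C c0 + q 0 * X 0 + q 1 * X 1 + q 2 * X 2 + q 3 * X 3) * B3 +
              q 3 * (X 0 ^ 10 * X 1 ^ 10 * X 2 ^ 10)) * X 3 ^ 11))) from by ring]
    rw [coeff_add, coeff_C_mul, coeff_mu4_prod, coeff_combo]
    ring
  rw [hlhs, hrhs] at hco
  exact hc0ne hco
end
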